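/- arXiv:2209.07451 — 2 statements merged into one kernel-verified Lean document; each statement's English description precedes it below -/
import Mathlib

section
/- Let a, b, m, n : ℤ → ℝ be a positive solution of the ABMN system on ℤ and set x = φ_0 = (n_{−1} − n_0)/(m_0 − m_{−1}). Then for every k ∈ ℕ and every integer ℓ ≥ 1, (n_{−ℓ} − n_k)/(m_k − m_{−ℓ}) = x·(S_k(x) + T_ℓ(x))/(P_k(x) + Q_ℓ(x)). -/
/-! At a site `i` the four equations are linear in the increments `u = m_i − m_{i−1}`,
`v = n_{i−1} − n_i`, `u' = m_{i+1} − m_i`, `v' = n_i − n_{i+1}` and force `u = a²/b`,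
`v = a + 2b`, `u' = 2a + b`, `v' = b²/a`. With `t = b/a` the ratio `φ_i = v/u` is `t + 2t²`,
on which `ω = 4t + 1`; this gives `u'/u = c(φ_i) − 1`, `v'/v = d(φ_i) − 1` and
`φ_{i+1} = s(φ_i)`, so `φ_j = s_j(x)` for every `j ∈ ℤ`. The increments are therefore
`m_0 − m_{−1}` and `n_{−1} − n_0` times the products defining `P, Q, S, T`, and telescoping gives
`m_k − m_{−ℓ} = (m_0 − m_{−1})(P_k + Q_ℓ)` and `n_{−ℓ} − n_k = (n_{−1} − n_0)(S_k + T_ℓ)`. -/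

/-- The ABMN system on ℤ. -/
def IsABMN (a b m n : ℤ → ℝ) : Prop :=
  (∀ i, 0 ≤ a i) ∧ (∀ i, 0 ≤ b i) ∧
  (∀ i : ℤ, (a i + b i) * (m i + a i) = a i * m (i + 1) + b i * m (i - 1)) ∧
  (∀ i : ℤ, (a i + b i) * (n i + b i) = a i * n (i + 1) + b i * n (i - 1)) ∧
  (∀ i : ℤ, (a i + b i) ^ 2 = b i * (m (i + 1) - m (i - 1))) ∧
  (∀ i : ℤ, (a i + b i) ^ 2 = a i * (n (i - 1) - n (i + 1)))

/-- `ω(x) = √(8x+1)`. -/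
noncomputable def wF (x : ℝ) : ℝ := Real.sqrt (8 * x + 1)

/-- `c(x) = (ω+3)²/16`. -/
noncomputable def cF (x : ℝ) : ℝ := (wF x + 3) ^ 2 / 16

/-- `d(x) = (ω+3)²/(8(ω+1))`. -/
noncomputable def dF (x : ℝ) : ℝ := (wF x + 3) ^ 2 / (8 * (wF x + 1))

/-- `s(x) = (ω−1)²/(4(ω+7))`. -/
noncomputable def sF (x : ℝ) : ℝ := (wF x - 1) ^ 2 / (4 * (wF x + 7))

/-- `s₋₁(x) = 1/s(1/x)`, the inverse of `s`. -/
noncomputable def sFinv (x : ℝ) : ℝ := 1 / sF (1 / x)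

/-- The ℤ-indexed iterates of `s`. -/
noncomputable def sIter (k : ℤ) (x : ℝ) : ℝ :=
  if 0 ≤ k then sF^[k.toNat] x else sFinv^[(-k).toNat] x

/-- `P₀ = 1` and `P_{k+1} − P_k = ∏_{i=0}^{k} (c_i(x) − 1)`. -/
noncomputable def Pfun (x : ℝ) : ℕ → ℝ
  | 0 => 1
  | k + 1 => Pfun x k + ∏ i ∈ Finset.range (k + 1), (cF (sIter i x) - 1)

/-- `S₀ = 1` and `S_{k+1} − S_k = ∏_{i=0}^{k} (d_i(x) − 1)`. -/
noncomputable def Sfun (x : ℝ) : ℕ → ℝ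
  | 0 => 1
  | k + 1 => Sfun x k + ∏ i ∈ Finset.range (k + 1), (dF (sIter i x) - 1)

/-- `Q₁ = 0` and `Q_{k+1} − Q_k = ∏_{i=1}^{k} (c_{−i}(x) − 1)⁻¹` for `k ≥ 1`. -/
noncomputable def Qfun (x : ℝ) : ℕ → ℝ
  | 0 => 0
  | 1 => 0
  | k + 2 => Qfun x (k + 1) + ∏ i ∈ Finset.range (k + 1), (cF (sIter (-((i : ℤ) + 1)) x) - 1)⁻¹

/-- `T₁ = 0` and `T_{k+1} − T_k = ∏_{i=1}^{k} (d_{−i}(x) − 1)⁻¹` for `k ≥ 1`. -/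
noncomputable def Tfun (x : ℝ) : ℕ → ℝ
  | 0 => 0
  | 1 => 0
  | k + 2 => Tfun x (k + 1) + ∏ i ∈ Finset.range (k + 1), (dF (sIter (-((i : ℤ) + 1)) x) - 1)⁻¹

/-- The finite-trail Mina margin map `M_{ℓ,k}(x) = x(S_k + T_ℓ)/(P_k + Q_ℓ)`. -/
noncomputable def Mfin (l k : ℕ) (x : ℝ) : ℝ :=
  x * (Sfun x k + Tfun x l) / (Pfun x k + Qfun x l)

open Finset

section Parametrization

variable {t : ℝ}

lemma wF_add_two_mul_sq (ht : 0 ≤ t) : wF (t + 2 * t ^ 2) = 4 * t + 1 := by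
  rw [wF, show 8 * (t + 2 * t ^ 2) + 1 = (4 * t + 1) ^ 2 by ring]
  exact Real.sqrt_sq (by positivity)

lemma cF_add_two_mul_sq (ht : 0 ≤ t) : cF (t + 2 * t ^ 2) = (t + 1) ^ 2 := by
  rw [cF, wF_add_two_mul_sq ht]
  ring

lemma dF_add_two_mul_sq (ht : 0 ≤ t) : dF (t + 2 * t ^ 2) = (t + 1) ^ 2 / (2 * t + 1) := by
  rw [dF, wF_add_two_mul_sq ht]
  field_simp
  ring

lemma sF_add_two_mul_sq (ht : 0 ≤ t) : sF (t + 2 * t ^ 2) = t ^ 2 / (t + 2) := by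
  rw [sF, wF_add_two_mul_sq ht]
  field_simp
  ring

lemma exists_pos_add_two_mul_sq_eq {y : ℝ} (hy : 0 < y) : ∃ t, 0 < t ∧ t + 2 * t ^ 2 = y := by
  have hw : (wF y) ^ 2 = 8 * y + 1 := Real.sq_sqrt (by linarith)
  have hw0 : 0 ≤ wF y := Real.sqrt_nonneg _
  have hw1 : 1 < wF y := by nlinarith
  exact ⟨(wF y - 1) / 4, by linarith, by linear_combination hw / 8⟩

/-- In the coordinate `y = t + 2t²` the map `s` reads `t ↦ t²/(t + 2)`, and `1/s(y)` is again
of this form with parameter `1/t`. -/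
lemma sFinv_sF {y : ℝ} (hy : 0 < y) : sFinv (sF y) = y := by
  obtain ⟨t, ht, rfl⟩ := exists_pos_add_two_mul_sq_eq hy
  have hinv : 1 / sF (t + 2 * t ^ 2) = t⁻¹ + 2 * t⁻¹ ^ 2 := by
    rw [sF_add_two_mul_sq ht.le]
    field_simp
  rw [sFinv, hinv, sF_add_two_mul_sq (by positivity)]
  field_simp

lemma one_lt_cF {y : ℝ} (hy : 0 < y) : 1 < cF y := by
  obtain ⟨t, ht, rfl⟩ := exists_pos_add_two_mul_sq_eq hy
  rw [cF_add_two_mul_sq ht.le]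
  nlinarith

lemma one_lt_dF {y : ℝ} (hy : 0 < y) : 1 < dF y := by
  obtain ⟨t, ht, rfl⟩ := exists_pos_add_two_mul_sq_eq hy
  rw [dF_add_two_mul_sq ht.le, one_lt_div (by positivity)]
  nlinarith

end Parametrization

lemma sIter_eq_of_succ {φ : ℤ → ℝ} (hpos : ∀ j, 0 < φ j) (hsucc : ∀ j, φ (j + 1) = sF (φ j))
    (j : ℤ) : sIter j (φ 0) = φ j := by
  have forward : ∀ N : ℕ, sF^[N] (φ 0) = φ N := by
    intro N
    induction N with
    | zero => rfl
    | succ N ih => rw [Function.iterate_succ_apply', ih, ← hsucc, Nat.cast_succ]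
  have backward : ∀ N : ℕ, sFinv^[N] (φ 0) = φ (-N) := by
    intro N
    induction N with
    | zero => simp
    | succ N ih =>
      have hstep : φ (-N) = sF (φ (-(N + 1 : ℕ))) := by
        rw [← hsucc]
        congr 1
        push_cast
        ring
      rw [Function.iterate_succ_apply', ih, hstep, sFinv_sF (hpos _)]
  rcases Int.eq_nat_or_neg j with ⟨N, rfl | rfl⟩
  · simp [sIter, forward]
  · rcases N.eq_zero_or_pos with rfl | hN
    · simp [sIter, forward]
    · simp [sIter, backward, hN.ne']

section Telescoping

variable {f r : ℤ → ℝ}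

lemma sub_succ_eq_mul_prod (hf : ∀ j, f (j + 1) - f j = r j * (f j - f (j - 1))) (k : ℕ) :
    f (k + 1) - f k = (f 0 - f (-1)) * ∏ i ∈ range (k + 1), r i := by
  induction k with
  | zero => simpa [mul_comm] using hf 0
  | succ k ih =>
    rw [prod_range_succ, ← mul_assoc, ← ih, mul_comm _ (r _)]
    push_cast
    simpa using hf (k + 1)

lemma sub_eq_mul_of_partialSums (hf : ∀ j, f (j + 1) - f j = r j * (f j - f (j - 1)))
    {F : ℕ → ℝ} (hF0 : F 0 = 1) (hF : ∀ k, F (k + 1) = F k + ∏ i ∈ range (k + 1), r i)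
    (k : ℕ) : f k - f (-1) = (f 0 - f (-1)) * F k := by
  induction k with
  | zero => simp [hF0]
  | succ k ih =>
    rw [hF, mul_add, ← ih, ← sub_succ_eq_mul_prod hf]
    push_cast
    ring

lemma sub_neg_eq_mul_prod_inv (hf : ∀ j, f (j + 1) - f j = r j * (f j - f (j - 1)))
    (hr : ∀ j, r j ≠ 0) (k : ℕ) :
    f (-(k + 1)) - f (-(k + 2)) = (f 0 - f (-1)) * ∏ i ∈ range (k + 1), (r (-(i + 1)))⁻¹ := by
  induction k with
  | zero =>
    have h0 := hf (-1)
    norm_num at h0 ⊢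
    rw [h0, mul_comm (r _), mul_inv_cancel_right₀ (hr _)]
  | succ k ih =>
    have hk := hf (-(k + 2))
    rw [show -((k : ℤ) + 2) + 1 = -(k + 1) by ring, show -((k : ℤ) + 2) - 1 = -(k + 3) by ring]
      at hk
    rw [prod_range_succ, ← mul_assoc, ← ih, hk, mul_comm (r _)]
    push_cast
    rw [show -((k : ℤ) + 1 + 1) = -(k + 2) by ring, mul_inv_cancel_right₀ (hr _)]
    ring_nf

lemma sub_neg_eq_mul_of_partialSums (hf : ∀ j, f (j + 1) - f j = r j * (f j - f (j - 1)))
    (hr : ∀ j, r j ≠ 0) {G : ℕ → ℝ} (hG1 : G 1 = 0)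
    (hG : ∀ k, G (k + 2) = G (k + 1) + ∏ i ∈ range (k + 1), (r (-(i + 1)))⁻¹)
    (l : ℕ) (hl : 1 ≤ l) : f (-1) - f (-l) = (f 0 - f (-1)) * G l := by
  induction l, hl using Nat.le_induction with
  | base => simp [hG1]
  | succ l hl ih =>
    obtain ⟨k, rfl⟩ := Nat.exists_eq_add_of_le' hl
    rw [hG, mul_add, ← ih, ← sub_neg_eq_mul_prod_inv hf hr]
    push_cast
    ring_nf

end Telescoping

noncomputable def phi (m n : ℤ → ℝ) (i : ℤ) : ℝ := (n (i - 1) - n i) / (m i - m (i - 1))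

namespace IsABMN

variable {a b m n : ℤ → ℝ} {i : ℤ}

lemma m_increments (h : IsABMN a b m n) (hai : 0 < a i) :
    b i * (m i - m (i - 1)) = a i ^ 2 ∧ m (i + 1) - m i = 2 * a i + b i := by
  obtain ⟨-, hb, e1, -, e3, -⟩ := h
  have hab : a i + b i ≠ 0 := by linarith [hb i]
  have hu : b i * (m i - m (i - 1)) = a i ^ 2 :=
    mul_left_cancel₀ hab (by linear_combination b i * e1 i - a i * e3 i)
  exact ⟨hu, mul_left_cancel₀ hai.ne' (by linear_combination -e1 i + hu)⟩

lemma n_increments (h : IsABMN a b m n) (hai : 0 < a i) :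
    n (i - 1) - n i = a i + 2 * b i ∧ a i * (n i - n (i + 1)) = b i ^ 2 := by
  obtain ⟨-, hb, -, e2, -, e4⟩ := h
  have hab : a i + b i ≠ 0 := by linarith [hb i]
  have hv : n (i - 1) - n i = a i + 2 * b i :=
    mul_left_cancel₀ hab (by linear_combination -e2 i - e4 i)
  exact ⟨hv, by linear_combination -e4 i - a i * hv⟩

lemma phi_eq (h : IsABMN a b m n) (hai : 0 < a i) (hbi : 0 < b i) :
    phi m n i = b i / a i + 2 * (b i / a i) ^ 2 := by
  obtain ⟨hu, -⟩ := h.m_increments hai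
  obtain ⟨hv, -⟩ := h.n_increments hai
  have hu' : m i - m (i - 1) = a i ^ 2 / b i := by
    field_simp
    linear_combination hu
  rw [phi, hv, hu']
  field_simp

lemma phi_pos (h : IsABMN a b m n) (hai : 0 < a i) (hbi : 0 < b i) : 0 < phi m n i := by
  rw [h.phi_eq hai hbi]
  positivity

lemma m_succ_sub (h : IsABMN a b m n) (hai : 0 < a i) (hbi : 0 < b i) :
    m (i + 1) - m i = (cF (phi m n i) - 1) * (m i - m (i - 1)) := by
  obtain ⟨hu, hu'⟩ := h.m_increments hai
  rw [h.phi_eq hai hbi, cF_add_two_mul_sq (by positivity), hu']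
  field_simp
  linear_combination (-2 * a i - b i) * hu

lemma n_sub_succ (h : IsABMN a b m n) (hai : 0 < a i) (hbi : 0 < b i) :
    n i - n (i + 1) = (dF (phi m n i) - 1) * (n (i - 1) - n i) := by
  obtain ⟨hv, hv'⟩ := h.n_increments hai
  have hv'' : n i - n (i + 1) = b i ^ 2 / a i := by
    field_simp
    linear_combination hv'
  rw [h.phi_eq hai hbi, dF_add_two_mul_sq (by positivity), hv, hv'']
  field_simp
  ring

lemma phi_succ (h : IsABMN a b m n) (hai : 0 < a i) (hbi : 0 < b i) :
    phi m n (i + 1) = sF (phi m n i) := by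
  obtain ⟨-, hu'⟩ := h.m_increments hai
  obtain ⟨-, hv'⟩ := h.n_increments hai
  have hv'' : n i - n (i + 1) = b i ^ 2 / a i := by
    field_simp
    linear_combination hv'
  rw [phi, add_sub_cancel_right, hu', hv'', h.phi_eq hai hbi, sF_add_two_mul_sq (by positivity)]
  field_simp
  ring

end IsABMN

/-- For a positive ABMN solution with `x = φ₀ = (n₋₁ − n₀)/(m₀ − m₋₁)`, the ratio
`(n₋ℓ − n_k)/(m_k − m₋ℓ)` equals `x(S_k(x) + T_ℓ(x))/(P_k(x) + Q_ℓ(x))`. -/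
theorem abmn_ratio_formula (a b m n : ℤ → ℝ) (h : IsABMN a b m n)
    (ha : ∀ i, 0 < a i) (hb : ∀ i, 0 < b i)
    (x : ℝ) (hx : x = (n (-1) - n 0) / (m 0 - m (-1))) :
    ∀ k : ℕ, ∀ l : ℕ, 1 ≤ l →
      (n (-(l : ℤ)) - n (k : ℤ)) / (m (k : ℤ) - m (-(l : ℤ)))
        = x * (Sfun x k + Tfun x l) / (Pfun x k + Qfun x l) := by
  intro k l hl
  have hφ : ∀ j, sIter j x = phi m n j := by
    have hx0 : x = phi m n 0 := by simp [hx, phi]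
    exact hx0 ▸ sIter_eq_of_succ (fun j => h.phi_pos (ha j) (hb j))
      (fun j => h.phi_succ (ha j) (hb j))
  have hm (j : ℤ) : m (j + 1) - m j = (cF (sIter j x) - 1) * (m j - m (j - 1)) := by
    rw [hφ]
    exact h.m_succ_sub (ha j) (hb j)
  have hn (j : ℤ) : -n (j + 1) - -n j = (dF (sIter j x) - 1) * (-n j - -n (j - 1)) := by
    rw [hφ]
    linear_combination h.n_sub_succ (ha j) (hb j)
  have hc (j : ℤ) : cF (sIter j x) - 1 ≠ 0 :=
    sub_ne_zero.mpr (one_lt_cF (hφ j ▸ h.phi_pos (ha j) (hb j))).ne'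
  have hd (j : ℤ) : dF (sIter j x) - 1 ≠ 0 :=
    sub_ne_zero.mpr (one_lt_dF (hφ j ▸ h.phi_pos (ha j) (hb j))).ne'
  have hP := sub_eq_mul_of_partialSums hm (F := Pfun x) rfl (fun _ => rfl) k
  have hQ := sub_neg_eq_mul_of_partialSums hm hc (G := Qfun x) rfl (fun _ => rfl) l hl
  have hS := sub_eq_mul_of_partialSums hn (f := fun j => -n j) (F := Sfun x) rfl (fun _ => rfl) k
  have hT := sub_neg_eq_mul_of_partialSums hn hd (f := fun j => -n j) (G := Tfun x) rfl
    (fun _ => rfl) l hl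
  calc (n (-(l : ℤ)) - n (k : ℤ)) / (m (k : ℤ) - m (-(l : ℤ)))
      = (n (-1) - n 0) * (Sfun x k + Tfun x l) / ((m 0 - m (-1)) * (Pfun x k + Qfun x l)) := by
        congr 1
        · linear_combination hS + hT
        · linear_combination hP + hQ
    _ = x * (Sfun x k + Tfun x l) / (Pfun x k + Qfun x l) := by
        rw [mul_div_mul_comm, ← hx, mul_div_assoc]
end

section
/- For every integer k ≥ 1 and every x ∈ (0,∞): M_{k,k}(x)·M_{k,k}(1/s(x)) = 1, and M_{k+1,k}(x)·M_{k+1,k}(1/x) = 1. In particular M_{k,k}(3) = 1 and M_{k+1,k}(1) = 1. -/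
open Finset

section CumProd

variable {K : Type*} [Field K]

noncomputable def cumProd (a : ℤ → K) : ℤ → K
  | Int.ofNat n => ∏ i ∈ range n, a i
  | Int.negSucc n => ∏ i ∈ range (n + 1), (a (-(i + 1)))⁻¹

variable {a : ℤ → K}

@[simp] lemma cumProd_zero : cumProd a 0 = 1 := rfl

lemma cumProd_natCast (n : ℕ) : cumProd a n = ∏ i ∈ range n, a i := rfl

@[simp] lemma cumProd_one : cumProd a 1 = a 0 := prod_range_one _

lemma cumProd_neg_natCast_sub_one (n : ℕ) :
    cumProd a (-n - 1) = ∏ i ∈ range (n + 1), (a (-(i + 1)))⁻¹ := by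
  rw [show -(n : ℤ) - 1 = Int.negSucc n by omega]; rfl

lemma cumProd_neg_sub_one (n : ℕ) :
    cumProd a (-n - 1) = cumProd a (-n) * (a (-n - 1))⁻¹ := by
  cases n with
  | zero => simpa using cumProd_neg_natCast_sub_one (a := a) 0
  | succ n =>
    rw [cumProd_neg_natCast_sub_one, prod_range_succ,
      show -((n + 1 : ℕ) : ℤ) = -n - 1 by push_cast; ring, cumProd_neg_natCast_sub_one]
    push_cast
    ring_nf

lemma cumProd_add_one {j : ℤ} (hj : a j ≠ 0) : cumProd a (j + 1) = a j * cumProd a j := by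
  induction j with
  | zero => simp
  | succ n _ =>
    rw [← Nat.cast_add_one, ← Nat.cast_add_one, cumProd_natCast, cumProd_natCast,
      prod_range_succ, mul_comm, Nat.cast_add_one]
  | pred n _ =>
    rw [sub_add_cancel, cumProd_neg_sub_one]
    field_simp

lemma eq_cumProd {f : ℤ → K} (ha : ∀ j, a j ≠ 0) (h0 : f 0 = 1)
    (hf : ∀ j, f (j + 1) = a j * f j) : f = cumProd a := by
  funext j
  induction j with
  | zero => rw [h0, cumProd_zero]
  | succ n ih => rw [hf, ih, cumProd_add_one (ha _)]
  | pred n ih =>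
    refine mul_left_cancel₀ (ha (-n - 1)) ?_
    rw [← hf, ← cumProd_add_one (ha _), sub_add_cancel, ih]

lemma cumProd_comp_add_one (ha : ∀ j, a j ≠ 0) :
    cumProd (fun i => a (i + 1)) = fun j => cumProd a (j + 1) / a 0 := by
  refine (eq_cumProd (fun i => ha (i + 1)) ?_ fun i => ?_).symm
  · simp [ha 0]
  · rw [cumProd_add_one (ha _)]; ring

lemma cumProd_inv_comp_neg (ha : ∀ j, a j ≠ 0) :
    cumProd (fun i => (a (-i))⁻¹) = fun j => cumProd a (1 - j) / a 0 := by
  refine (eq_cumProd (fun i => inv_ne_zero (ha (-i))) ?_ fun i => ?_).symm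
  · simp [ha 0]
  · rw [show 1 - i = -i + 1 by ring, cumProd_add_one (ha _), show 1 - (i + 1) = -i by ring]
    field_simp [ha (-i)]

end CumProd

lemma cumProd_pos {K : Type*} [Field K] [LinearOrder K] [IsStrictOrderedRing K] {a : ℤ → K}
    (ha : ∀ j, 0 < a j) : ∀ j, 0 < cumProd a j
  | Int.ofNat _ => prod_pos fun _ _ => ha _
  | Int.negSucc _ => prod_pos fun _ _ => inv_pos.2 (ha _)

section WindowSum

variable {M : Type*} [AddCommMonoid M]

noncomputable def windowSum (f : ℤ → M) (m k : ℕ) : M :=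
  ∑ j ∈ range (m + k + 1), f (j - m)

lemma windowSum_eq (f : ℤ → M) (m k : ℕ) :
    windowSum f m k = ∑ j ∈ range (k + 1), f j + ∑ j ∈ range m, f (-(j + 1)) := by
  rw [windowSum, add_assoc, sum_range_add, ← sum_range_reflect, add_comm]
  congr 1 <;> refine sum_congr rfl fun j hj => congrArg f ?_
  · omega
  · have := mem_range.1 hj
    omega

lemma windowSum_comp_add_one (f : ℤ → M) (m k : ℕ) :
    windowSum (fun j => f (j + 1)) (m + 1) k = windowSum f m (k + 1) := by
  unfold windowSum
  rw [show m + 1 + k + 1 = m + (k + 1) + 1 by ring]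
  refine sum_congr rfl fun j _ => congrArg f ?_
  omega

lemma windowSum_comp_one_sub (f : ℤ → M) (m n : ℕ) :
    windowSum (fun j => f (1 - j)) m (n + 1) = windowSum f n (m + 1) := by
  unfold windowSum
  rw [← sum_range_reflect, show m + (n + 1) + 1 = n + (m + 1) + 1 by ring]
  refine sum_congr rfl fun j hj => congrArg f ?_
  have := mem_range.1 hj
  omega

end WindowSum

lemma windowSum_div {K : Type*} [DivisionRing K] (f : ℤ → K) (c : K) (m k : ℕ) :
    windowSum (fun j => f j / c) m k = windowSum f m k / c :=
  (sum_div _ _ _).symm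

lemma windowSum_pos {K : Type*} [AddCommMonoid K] [PartialOrder K] [IsOrderedCancelAddMonoid K]
    {f : ℤ → K} (hf : ∀ j, 0 < f j) (m k : ℕ) : 0 < windowSum f m k :=
  sum_pos (fun _ _ => hf _) nonempty_range_add_one

section Dynamics

variable {z : ℝ}

lemma wF_sq (hz : 0 < z) : wF z ^ 2 = 8 * z + 1 := Real.sq_sqrt (by linarith)

lemma one_lt_wF (hz : 0 < z) : 1 < wF z := by
  rw [wF, Real.lt_sqrt zero_le_one]; linarith

lemma sF_pos (hz : 0 < z) : 0 < sF z := by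
  have := one_lt_wF hz
  unfold sF; positivity

lemma wF_one_div_sF (hz : 0 < z) : wF (1 / sF z) = (wF z + 15) / (wF z - 1) := by
  have hw := one_lt_wF hz
  have hw1 : wF z - 1 ≠ 0 := by linarith
  rw [wF, ← Real.sqrt_sq (show 0 ≤ (wF z + 15) / (wF z - 1) by positivity)]
  congr 1
  unfold sF
  field_simp
  ring

lemma sF_one_div_sF (hz : 0 < z) : sF (1 / sF z) = 1 / z := by
  have hw := one_lt_wF hz
  have hw1 : wF z - 1 ≠ 0 := by linarith
  rw [sF, wF_one_div_sF hz, div_eq_div_iff (by positivity) hz.ne']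
  field_simp
  linear_combination (-32) * wF_sq hz

lemma cF_sub_one (z : ℝ) : cF z - 1 = (wF z - 1) * (wF z + 7) / 16 := by
  rw [cF]; ring

lemma dF_sub_one (hz : 0 < z) : dF z - 1 = (wF z - 1) ^ 2 / (8 * (wF z + 1)) := by
  have hw := one_lt_wF hz
  rw [dF]; field_simp; ring

lemma cF_sub_one_pos (hz : 0 < z) : 0 < cF z - 1 := by
  have hw := one_lt_wF hz
  rw [cF_sub_one]; exact div_pos (mul_pos (by linarith) (by linarith)) (by norm_num)

lemma dF_sub_one_pos (hz : 0 < z) : 0 < dF z - 1 := by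
  have hw := one_lt_wF hz
  rw [dF_sub_one hz]; exact div_pos (pow_pos (by linarith) 2) (by linarith)

lemma cF_one_div_sF (hz : 0 < z) : cF (1 / sF z) - 1 = (dF z - 1)⁻¹ := by
  have hw := one_lt_wF hz
  have hw1 : wF z - 1 ≠ 0 := by linarith
  rw [cF_sub_one, wF_one_div_sF hz, dF_sub_one hz]
  field_simp
  ring

lemma dF_one_div_sF (hz : 0 < z) : dF (1 / sF z) - 1 = (cF z - 1)⁻¹ := by
  have hw := one_lt_wF hz
  have hw1 : wF z - 1 ≠ 0 := by linarith
  have hw7 : wF z + 7 ≠ 0 := by linarith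
  have h : (wF z + 15) / (wF z - 1) + 1 = 2 * (wF z + 7) / (wF z - 1) := by field_simp; ring
  rw [dF, wF_one_div_sF hz, h, cF_sub_one]
  field_simp
  ring

lemma mul_dF_sub_one (hz : 0 < z) : z * (dF z - 1) = sF z * (cF z - 1) := by
  have hw := one_lt_wF hz
  rw [cF_sub_one, dF_sub_one hz, sF]
  field_simp
  linear_combination (-8 * (wF z - 1) ^ 2) * wF_sq hz

end Dynamics

section Orbit

variable {x : ℝ}

lemma sFinv_pos (hx : 0 < x) : 0 < sFinv x := by
  have := sF_pos (one_div_pos.2 hx)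
  rw [sFinv]; positivity

lemma sF_sFinv (hx : 0 < x) : sF (sFinv x) = x := by
  rw [sFinv, sF_one_div_sF (one_div_pos.2 hx), one_div_one_div]

lemma sFinv_sF_s11 (hx : 0 < x) : sFinv (sF x) = x := by
  rw [sFinv, sF_one_div_sF hx, one_div_one_div]

lemma sIter_pos (hx : 0 < x) (j : ℤ) : 0 < sIter j x := by
  unfold sIter
  split_ifs
  · exact Function.Iterate.rec (0 < ·) hx (fun _ => sF_pos) _
  · exact Function.Iterate.rec (0 < ·) hx (fun _ => sFinv_pos) _

@[simp] lemma sIter_zero (x : ℝ) : sIter 0 x = x := rfl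

lemma sIter_natCast (n : ℕ) (x : ℝ) : sIter n x = sF^[n] x := by simp [sIter]

lemma sIter_neg_natCast (n : ℕ) (x : ℝ) : sIter (-n) x = sFinv^[n] x := by
  cases n with
  | zero => rfl
  | succ n =>
    rw [sIter, if_neg (by omega), neg_neg, Int.toNat_natCast]

lemma sIter_add_one (hx : 0 < x) (j : ℤ) : sIter (j + 1) x = sF (sIter j x) := by
  rcases Int.eq_nat_or_neg j with ⟨n, rfl | rfl⟩
  · rw [← Nat.cast_add_one, sIter_natCast, sIter_natCast, Function.iterate_succ_apply']
  · cases n with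
    | zero => simpa using sIter_natCast 1 x
    | succ n =>
      rw [show -((n + 1 : ℕ) : ℤ) + 1 = -n by push_cast; ring, sIter_neg_natCast (n + 1),
        Function.iterate_succ_apply', ← sIter_neg_natCast, sF_sFinv (sIter_pos hx _)]

lemma eq_sIter {f : ℤ → ℝ} (hf : ∀ j, 0 < f j) (hrec : ∀ j, f (j + 1) = sF (f j)) (j : ℤ) :
    f j = sIter j (f 0) := by
  have hf0 := hf 0
  induction j with
  | zero => rfl
  | succ n ih => rw [hrec, ih, sIter_add_one hf0]
  | pred n ih =>
    have h := sIter_add_one hf0 (-n - 1)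
    rw [sub_add_cancel] at h
    rw [← sFinv_sF_s11 (hf _), ← hrec, sub_add_cancel, ih, h, sFinv_sF_s11 (sIter_pos hf0 _)]

lemma sIter_add_one_sFinv (hx : 0 < x) (j : ℤ) : sIter (j + 1) (sFinv x) = sIter j x := by
  have h1 : sIter (0 + 1) (sFinv x) = x := by
    rw [sIter_add_one (sFinv_pos hx), sIter_zero, sF_sFinv hx]
  have h := eq_sIter (f := fun j => sIter (j + 1) (sFinv x)) (fun _ => sIter_pos (sFinv_pos hx) _)
    (fun j => sIter_add_one (sFinv_pos hx) _) j
  rwa [h1] at h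

lemma sIter_one_div_sF (hx : 0 < x) (j : ℤ) : sIter j (1 / sF x) = 1 / sF (sIter (-j) x) := by
  have hpos : ∀ j, 0 < 1 / sF (sIter (-j) x) := fun j => one_div_pos.2 (sF_pos (sIter_pos hx _))
  have hrec : ∀ j : ℤ, 1 / sF (sIter (-(j + 1)) x) = sF (1 / sF (sIter (-j) x)) := fun j => by
    rw [sF_one_div_sF (sIter_pos hx _), ← sIter_add_one hx, neg_add, neg_add_cancel_right]
  have h := eq_sIter hpos hrec j
  rw [neg_zero, sIter_zero] at h
  exact h.symm

end Orbit

noncomputable def orbitSeq (g : ℝ → ℝ) (x : ℝ) (j : ℤ) : ℝ := g (sIter j x) - 1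

section Margin

variable {x : ℝ}

lemma orbitSeq_cF_pos (hx : 0 < x) (j : ℤ) : 0 < orbitSeq cF x j :=
  cF_sub_one_pos (sIter_pos hx j)

lemma orbitSeq_dF_pos (hx : 0 < x) (j : ℤ) : 0 < orbitSeq dF x j :=
  dF_sub_one_pos (sIter_pos hx j)

lemma orbitSeq_sFinv (g : ℝ → ℝ) (hx : 0 < x) :
    (fun j => orbitSeq g (sFinv x) (j + 1)) = orbitSeq g x := by
  funext j
  rw [orbitSeq, orbitSeq, sIter_add_one_sFinv hx]

lemma orbitSeq_cF_one_div_sF (hx : 0 < x) :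
    orbitSeq cF (1 / sF x) = fun j => (orbitSeq dF x (-j))⁻¹ := by
  funext j
  rw [orbitSeq, orbitSeq, sIter_one_div_sF hx, cF_one_div_sF (sIter_pos hx _)]

lemma orbitSeq_dF_one_div_sF (hx : 0 < x) :
    orbitSeq dF (1 / sF x) = fun j => (orbitSeq cF x (-j))⁻¹ := by
  funext j
  rw [orbitSeq, orbitSeq, sIter_one_div_sF hx, dF_one_div_sF (sIter_pos hx _)]

lemma Pfun_eq_sum (x : ℝ) (k : ℕ) :
    Pfun x k = ∑ j ∈ range (k + 1), cumProd (orbitSeq cF x) j := by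
  induction k with
  | zero => simp [Pfun]
  | succ k ih => rw [Pfun, ih, sum_range_succ _ (k + 1)]; rfl

lemma Sfun_eq_sum (x : ℝ) (k : ℕ) :
    Sfun x k = ∑ j ∈ range (k + 1), cumProd (orbitSeq dF x) j := by
  induction k with
  | zero => simp [Sfun]
  | succ k ih => rw [Sfun, ih, sum_range_succ _ (k + 1)]; rfl

lemma Qfun_eq_sum (x : ℝ) (m : ℕ) :
    Qfun x (m + 1) = ∑ j ∈ range m, cumProd (orbitSeq cF x) (-(j + 1)) := by
  induction m with
  | zero => rfl
  | succ m ih => rw [Qfun, ih, sum_range_succ]; rfl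

lemma Tfun_eq_sum (x : ℝ) (m : ℕ) :
    Tfun x (m + 1) = ∑ j ∈ range m, cumProd (orbitSeq dF x) (-(j + 1)) := by
  induction m with
  | zero => rfl
  | succ m ih => rw [Tfun, ih, sum_range_succ]; rfl

lemma Mfin_eq_windowSum (m k : ℕ) (x : ℝ) :
    Mfin (m + 1) k x = x * windowSum (cumProd (orbitSeq dF x)) m k /
      windowSum (cumProd (orbitSeq cF x)) m k := by
  rw [Mfin, windowSum_eq, windowSum_eq, Pfun_eq_sum, Qfun_eq_sum, Sfun_eq_sum, Tfun_eq_sum]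

lemma Mfin_pos (hx : 0 < x) (m k : ℕ) : 0 < Mfin (m + 1) k x := by
  have hP := windowSum_pos (cumProd_pos (orbitSeq_cF_pos hx)) m k
  have hS := windowSum_pos (cumProd_pos (orbitSeq_dF_pos hx)) m k
  rw [Mfin_eq_windowSum]
  positivity

lemma Mfin_one_div_sF (hx : 0 < x) (m n : ℕ) :
    Mfin (m + 1) (n + 1) (1 / sF x) =
      1 / sF x * (windowSum (cumProd (orbitSeq cF x)) n (m + 1) / orbitSeq cF x 0) /
        (windowSum (cumProd (orbitSeq dF x)) n (m + 1) / orbitSeq dF x 0) := by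
  rw [Mfin_eq_windowSum, orbitSeq_cF_one_div_sF hx, orbitSeq_dF_one_div_sF hx,
    cumProd_inv_comp_neg fun j => (orbitSeq_cF_pos hx j).ne',
    cumProd_inv_comp_neg fun j => (orbitSeq_dF_pos hx j).ne', windowSum_div, windowSum_div,
    windowSum_comp_one_sub, windowSum_comp_one_sub]

lemma Mfin_eq_windowSum_sFinv (hx : 0 < x) (m k : ℕ) :
    Mfin (m + 2) k x =
      x * (windowSum (cumProd (orbitSeq dF (sFinv x))) m (k + 1) / orbitSeq dF (sFinv x) 0) /
        (windowSum (cumProd (orbitSeq cF (sFinv x))) m (k + 1) / orbitSeq cF (sFinv x) 0) := by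
  have hy := sFinv_pos hx
  rw [Mfin_eq_windowSum, ← orbitSeq_sFinv cF hx, ← orbitSeq_sFinv dF hx,
    cumProd_comp_add_one fun j => (orbitSeq_cF_pos hy j).ne',
    cumProd_comp_add_one fun j => (orbitSeq_dF_pos hy j).ne', windowSum_div, windowSum_div,
    windowSum_comp_add_one, windowSum_comp_add_one]

lemma Mfin_mul_Mfin_one_div_sF (hx : 0 < x) (n : ℕ) :
    Mfin (n + 1) (n + 1) x * Mfin (n + 1) (n + 1) (1 / sF x) = 1 := by
  have hP := windowSum_pos (cumProd_pos (orbitSeq_cF_pos hx)) n (n + 1)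
  have hS := windowSum_pos (cumProd_pos (orbitSeq_dF_pos hx)) n (n + 1)
  have hc := orbitSeq_cF_pos hx 0
  have hd := orbitSeq_dF_pos hx 0
  have hs := sF_pos hx
  have key : x * orbitSeq dF x 0 = sF x * orbitSeq cF x 0 := mul_dF_sub_one hx
  rw [Mfin_eq_windowSum, Mfin_one_div_sF hx]
  field_simp
  linear_combination key

lemma Mfin_mul_Mfin_one_div (hx : 0 < x) (n : ℕ) :
    Mfin (n + 2) (n + 1) x * Mfin (n + 2) (n + 1) (1 / x) = 1 := by
  have hy := sFinv_pos hx
  have hP := windowSum_pos (cumProd_pos (orbitSeq_cF_pos hy)) n (n + 2)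
  have hS := windowSum_pos (cumProd_pos (orbitSeq_dF_pos hy)) n (n + 2)
  have hc := orbitSeq_cF_pos hy 0
  have hd := orbitSeq_dF_pos hy 0
  have h : 1 / x = 1 / sF (sFinv x) := by rw [sF_sFinv hx]
  rw [Mfin_eq_windowSum_sFinv hx, h, Mfin_one_div_sF hy, sF_sFinv hx]
  field_simp

end Margin

lemma sF_three : sF 3 = 1 / 3 := by
  have hw : wF 3 = 5 := by
    rw [wF, show (8 * 3 + 1 : ℝ) = 5 ^ 2 by norm_num, Real.sqrt_sq (by norm_num)]
  rw [sF, hw]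
  norm_num

/-- Symmetries of the finite-trail Mina margin maps:
`M_{k,k}(x)·M_{k,k}(1/s(x)) = 1` and `M_{k+1,k}(x)·M_{k+1,k}(1/x) = 1`;
in particular `M_{k,k}(3) = 1` and `M_{k+1,k}(1) = 1`. -/
theorem mfin_symmetries (k : ℕ) (hk : 1 ≤ k) (x : ℝ) (hx : 0 < x) :
    Mfin k k x * Mfin k k (1 / sF x) = 1 ∧
    Mfin (k + 1) k x * Mfin (k + 1) k (1 / x) = 1 ∧
    Mfin k k 3 = 1 ∧
    Mfin (k + 1) k 1 = 1 := by
  obtain ⟨n, rfl⟩ : ∃ n, k = n + 1 := ⟨k - 1, by omega⟩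
  have h3 := Mfin_mul_Mfin_one_div_sF (x := 3) (by norm_num) n
  have h1 := Mfin_mul_Mfin_one_div (x := 1) one_pos n
  rw [sF_three, one_div_one_div, ← sq] at h3
  rw [div_one, ← sq] at h1
  refine ⟨Mfin_mul_Mfin_one_div_sF hx n, Mfin_mul_Mfin_one_div hx n, ?_, ?_⟩
  · exact (pow_eq_one_iff_of_nonneg (Mfin_pos (by norm_num) n (n + 1)).le two_ne_zero).1 h3
  · exact (pow_eq_one_iff_of_nonneg (Mfin_pos one_pos (n + 1) (n + 1)).le two_ne_zero).1 h1
end
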